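/- The function ψ₁ tends to 3/4 both as u → (1/√3)⁺ and as u → (√3)⁻, and the function ψ₂ tends to 9/4 both as u → (1/√3)⁺ and as u → (√3)⁻ (limits taken within the open interval (1/√3, √3)). -/

import Mathlib

noncomputable def mParam (u : ℝ) : ℝ :=
  (8 * u ^ 3 - u ^ 3 * (1 + u ^ 2) ^ ((3 : ℝ) / 2)) /
    (8 * u ^ 3 - (1 + u ^ 2) ^ ((3 : ℝ) / 2))

noncomputable def alphaParam (u : ℝ) : ℝ :=
  Real.sqrt (2 * mParam u * u ^ 2 + 2)

noncomputable def muParam (u : ℝ) : ℝ :=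
  4 * mParam u * alphaParam u / Real.sqrt (1 + u ^ 2) +
    alphaParam u * (mParam u) ^ 2 / (2 * u) + alphaParam u / 2

noncomputable def phi1 (u : ℝ) : ℝ :=
  1 + 2 * (mParam u + 1) * (alphaParam u) ^ 3 * (2 - u ^ 2) /
    (muParam u * (1 + u ^ 2) ^ ((5 : ℝ) / 2))

noncomputable def phi2 (u : ℝ) : ℝ :=
  1 + 2 * (mParam u + 1) * (alphaParam u) ^ 3 * (2 * u ^ 2 - 1) /
    (muParam u * (1 + u ^ 2) ^ ((5 : ℝ) / 2))

noncomputable def psi1 (u : ℝ) : ℝ :=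
  1 + (4 * alphaParam u / muParam u) *
    ((2 * (mParam u) ^ 2 * u ^ 4 + (6 * mParam u - (mParam u) ^ 2 - 1) * u ^ 2 + 2) /
        (1 + u ^ 2) ^ ((5 : ℝ) / 2) -
      mParam u * u ^ 2 / 8 - mParam u / (8 * u ^ 3))

noncomputable def psi2 (u : ℝ) : ℝ :=
  1 + (4 * alphaParam u / muParam u) *
    ((-(mParam u) ^ 2 * u ^ 4 + (2 * (mParam u) ^ 2 - 6 * mParam u + 2) * u ^ 2 - 1) /
        (1 + u ^ 2) ^ ((5 : ℝ) / 2) +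
      mParam u * u ^ 2 / 4 + mParam u / (4 * u ^ 3))


/-! At `u = √3` the mass ratio `m` vanishes and `ψ₁`, `ψ₂` are continuous there, so their limits
are values. At `u = 1/√3` the denominator of `m` vanishes instead; there one uses the symmetry
`m(1/u) = 1/m(u)`, `ψᵢ(1/u) = ψᵢ(u)` (relabel the two diagonals of the rhombus and rescale), and
`u ↦ 1/u` maps `(1/√3, √3)` onto itself, swapping its endpoints. -/

open Real Set Filter Topology

lemma rpow_div_two_eq_sqrt_pow {x : ℝ} (hx : 0 ≤ x) (n : ℕ) : x ^ ((n : ℝ) / 2) = √x ^ n := by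
  rw [rpow_div_two_eq_sqrt _ hx, rpow_natCast]

lemma one_add_sq_rpow_three_halves (u : ℝ) :
    (1 + u ^ 2) ^ ((3 : ℝ) / 2) = √(1 + u ^ 2) ^ 3 := by
  exact_mod_cast rpow_div_two_eq_sqrt_pow (by positivity : (0 : ℝ) ≤ 1 + u ^ 2) 3

lemma one_add_sq_rpow_five_halves (u : ℝ) :
    (1 + u ^ 2) ^ ((5 : ℝ) / 2) = √(1 + u ^ 2) ^ 5 := by
  exact_mod_cast rpow_div_two_eq_sqrt_pow (by positivity : (0 : ℝ) ≤ 1 + u ^ 2) 5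

lemma sqrt_one_add_inv_sq {u : ℝ} (hu : 0 < u) : √(1 + u⁻¹ ^ 2) = √(1 + u ^ 2) / u := by
  rw [show 1 + u⁻¹ ^ 2 = (1 + u ^ 2) / u ^ 2 by field_simp; ring, sqrt_div (by positivity),
    sqrt_sq hu.le]

lemma mParam_eq (u : ℝ) :
    mParam u = (8 * u ^ 3 - u ^ 3 * √(1 + u ^ 2) ^ 3) / (8 * u ^ 3 - √(1 + u ^ 2) ^ 3) := by
  rw [mParam, one_add_sq_rpow_three_halves]

lemma mParam_inv {u : ℝ} (hu : 0 < u) : mParam u⁻¹ = (mParam u)⁻¹ := by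
  rw [mParam_eq, mParam_eq, sqrt_one_add_inv_sq hu, inv_div]
  field_simp

lemma mParam_pos {u : ℝ} (hu : u ∈ Ioo (√3)⁻¹ √3) : 0 < mParam u := by
  obtain ⟨hl, hr⟩ := hu
  have hu0 : 0 < u := lt_trans (by positivity) hl
  have h3 : √3 ^ 2 = 3 := sq_sqrt (by norm_num)
  have hs : 0 ≤ √(1 + u ^ 2) := sqrt_nonneg _
  have hs_lt_two : √(1 + u ^ 2) < 2 := by
    rw [sqrt_lt' two_pos]
    nlinarith
  have hs_lt_two_mul : √(1 + u ^ 2) < 2 * u := by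
    rw [sqrt_lt' (by positivity)]
    rw [inv_lt_iff_one_lt_mul₀' (by positivity)] at hl
    nlinarith
  rw [mParam_eq]
  apply div_pos
  · nlinarith [pow_lt_pow_left₀ hs_lt_two hs three_ne_zero, pow_pos hu0 3]
  · linarith [pow_lt_pow_left₀ hs_lt_two_mul hs three_ne_zero]

lemma alphaParam_pos {u : ℝ} (hm : 0 ≤ mParam u) : 0 < alphaParam u :=
  sqrt_pos.2 (by positivity)

lemma muParam_eq_alphaParam_mul (u : ℝ) :
    muParam u = alphaParam u * (4 * mParam u / √(1 + u ^ 2) + mParam u ^ 2 / (2 * u) + 1 / 2) := by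
  rw [muParam]
  ring

lemma four_mul_alphaParam_div_muParam {u : ℝ} (hα : alphaParam u ≠ 0) :
    4 * alphaParam u / muParam u =
      4 / (4 * mParam u / √(1 + u ^ 2) + mParam u ^ 2 / (2 * u) + 1 / 2) := by
  rw [mul_div_assoc, muParam_eq_alphaParam_mul, div_mul_cancel_left₀ hα, ← div_eq_mul_inv]

lemma psi1_inv {u : ℝ} (hu : 0 < u) (hm : 0 < mParam u) : psi1 u⁻¹ = psi1 u := by
  have hm' : 0 ≤ mParam u⁻¹ := by rw [mParam_inv hu]; positivity
  have hs : 0 < √(1 + u ^ 2) := sqrt_pos.2 (by positivity)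
  rw [psi1, psi1, four_mul_alphaParam_div_muParam (alphaParam_pos hm').ne',
    four_mul_alphaParam_div_muParam (alphaParam_pos hm.le).ne', mParam_inv hu,
    one_add_sq_rpow_five_halves, one_add_sq_rpow_five_halves, sqrt_one_add_inv_sq hu]
  field_simp
  ring

lemma psi2_inv {u : ℝ} (hu : 0 < u) (hm : 0 < mParam u) : psi2 u⁻¹ = psi2 u := by
  have hm' : 0 ≤ mParam u⁻¹ := by rw [mParam_inv hu]; positivity
  have hs : 0 < √(1 + u ^ 2) := sqrt_pos.2 (by positivity)
  rw [psi2, psi2, four_mul_alphaParam_div_muParam (alphaParam_pos hm').ne',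
    four_mul_alphaParam_div_muParam (alphaParam_pos hm.le).ne', mParam_inv hu,
    one_add_sq_rpow_five_halves, one_add_sq_rpow_five_halves, sqrt_one_add_inv_sq hu]
  field_simp
  ring

section continuity

variable {x : ℝ} (hm : ContinuousAt mParam x)
include hm

lemma continuousAt_alphaParam : ContinuousAt alphaParam x := by
  unfold alphaParam
  fun_prop

lemma continuousAt_muParam (hx : x ≠ 0) : ContinuousAt muParam x := by
  have := continuousAt_alphaParam hm
  unfold muParam
  fun_prop (disch := positivity)

lemma continuousAt_psi1 (hx : x ≠ 0) (hμ : muParam x ≠ 0) : ContinuousAt psi1 x := by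
  have := continuousAt_alphaParam hm
  have := continuousAt_muParam hm hx
  unfold psi1
  fun_prop (disch := first | assumption | positivity)

lemma continuousAt_psi2 (hx : x ≠ 0) (hμ : muParam x ≠ 0) : ContinuousAt psi2 x := by
  have := continuousAt_alphaParam hm
  have := continuousAt_muParam hm hx
  unfold psi2
  fun_prop (disch := first | assumption | positivity)

end continuity

lemma sqrt_one_add_sqrt_three_sq : √(1 + √3 ^ 2) = 2 := by
  rw [sq_sqrt (by norm_num), show (1 : ℝ) + 3 = 2 ^ 2 by norm_num, sqrt_sq zero_le_two]

lemma mParam_sqrt_three : mParam √3 = 0 := by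
  rw [mParam_eq, sqrt_one_add_sqrt_three_sq]
  ring

lemma continuousAt_mParam_sqrt_three : ContinuousAt mParam √3 := by
  have hden : 8 * √3 ^ 3 - √(1 + √3 ^ 2) ^ 3 ≠ 0 := by
    rw [sqrt_one_add_sqrt_three_sq, pow_succ, sq_sqrt (by norm_num)]
    nlinarith [sq_sqrt (show (0 : ℝ) ≤ 3 by norm_num)]
  simp only [funext mParam_eq]
  exact ContinuousAt.div (by fun_prop) (by fun_prop) hden

lemma alphaParam_sqrt_three : alphaParam √3 = √2 := by
  rw [alphaParam, mParam_sqrt_three]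
  norm_num

lemma muParam_sqrt_three : muParam √3 = √2 / 2 := by
  rw [muParam, alphaParam_sqrt_three, mParam_sqrt_three]
  ring

lemma psi1_sqrt_three : psi1 √3 = 3 / 4 := by
  have h2 : √2 ≠ 0 := by positivity
  rw [psi1, muParam_sqrt_three, alphaParam_sqrt_three, mParam_sqrt_three,
    one_add_sq_rpow_five_halves, sqrt_one_add_sqrt_three_sq, sq_sqrt (by norm_num)]
  field_simp
  ring

lemma psi2_sqrt_three : psi2 √3 = 9 / 4 := by
  have h2 : √2 ≠ 0 := by positivity
  rw [psi2, muParam_sqrt_three, alphaParam_sqrt_three, mParam_sqrt_three,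
    one_add_sq_rpow_five_halves, sqrt_one_add_sqrt_three_sq, sq_sqrt (by norm_num)]
  field_simp
  ring

lemma Filter.Tendsto.of_inv_invariant_nhdsWithin_Ioo {f : ℝ → ℝ} {a : ℝ} {l : Filter ℝ}
    (ha : 0 < a) (hf : ∀ u ∈ Ioo a⁻¹ a, f u⁻¹ = f u) (h : Tendsto f (𝓝[Ioo a⁻¹ a] a) l) :
    Tendsto f (𝓝[Ioo a⁻¹ a] a⁻¹) l := by
  have hinv : Tendsto Inv.inv (𝓝[Ioo a⁻¹ a] a⁻¹) (𝓝[Ioo a⁻¹ a] a) := by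
    refine tendsto_nhdsWithin_iff.2 ⟨?_, ?_⟩
    · simpa using (continuousAt_inv₀ (inv_ne_zero ha.ne')).tendsto.mono_left nhdsWithin_le_nhds
    · filter_upwards [self_mem_nhdsWithin] with u ⟨hl, hr⟩
      have hu : 0 < u := lt_trans (by positivity) hl
      exact ⟨(inv_lt_inv₀ ha hu).2 hr, (inv_lt_comm₀ hu ha).2 hl⟩
  refine (h.comp hinv).congr' ?_
  filter_upwards [self_mem_nhdsWithin] with u hu using hf u hu

/-- Limits of `ψ₁` and `ψ₂` at the endpoints of `(1/√3, √3)`. -/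
theorem psi_limits :
    Filter.Tendsto psi1
      (nhdsWithin (1 / Real.sqrt 3) (Set.Ioo (1 / Real.sqrt 3) (Real.sqrt 3)))
      (nhds (3 / 4)) ∧
    Filter.Tendsto psi1
      (nhdsWithin (Real.sqrt 3) (Set.Ioo (1 / Real.sqrt 3) (Real.sqrt 3)))
      (nhds (3 / 4)) ∧
    Filter.Tendsto psi2
      (nhdsWithin (1 / Real.sqrt 3) (Set.Ioo (1 / Real.sqrt 3) (Real.sqrt 3)))
      (nhds (9 / 4)) ∧
    Filter.Tendsto psi2
      (nhdsWithin (Real.sqrt 3) (Set.Ioo (1 / Real.sqrt 3) (Real.sqrt 3)))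
      (nhds (9 / 4)) := by
  simp only [one_div]
  have h3 : (0 : ℝ) < √3 := by positivity
  have hμ : muParam √3 ≠ 0 := by rw [muParam_sqrt_three]; positivity
  have hm := continuousAt_mParam_sqrt_three
  have right1 : Tendsto psi1 (𝓝[Ioo (√3)⁻¹ √3] √3) (𝓝 (3 / 4)) :=
    psi1_sqrt_three ▸ (continuousAt_psi1 hm h3.ne' hμ).continuousWithinAt.tendsto
  have right2 : Tendsto psi2 (𝓝[Ioo (√3)⁻¹ √3] √3) (𝓝 (9 / 4)) :=
    psi2_sqrt_three ▸ (continuousAt_psi2 hm h3.ne' hμ).continuousWithinAt.tendsto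
  have hpos : ∀ u ∈ Ioo (√3)⁻¹ √3, 0 < u := fun u hu => lt_trans (by positivity) hu.1
  refine ⟨right1.of_inv_invariant_nhdsWithin_Ioo h3 ?_, right1,
    right2.of_inv_invariant_nhdsWithin_Ioo h3 ?_, right2⟩
  · exact fun u hu => psi1_inv (hpos u hu) (mParam_pos hu)
  · exact fun u hu => psi2_inv (hpos u hu) (mParam_pos hu)
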